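/- The identity element is unique up to identity of game trees: if a scoring play game G is not identical to 0 = {.|0|.}, then G ≠ 0, i.e., there exists a game X such that G +_ℓ X and X have different outcomes. -/

import Mathlib

inductive SGame : Type where
  | mk (left right : List SGame) (score : ℝ)

namespace SGame

def leftOpts : SGame → List SGame | mk L _ _ => L
def rightOpts : SGame → List SGame | mk _ R _ => R
def score : SGame → ℝ | mk _ _ s => s

mutual
  /-- Optimal final score when Left moves first. -/
  def leftScore : SGame → ℝ
    | mk [] _ s => s
    | mk (g :: L) _ _ => maxRight g L
  termination_by G => sizeOf G
  decreasing_by all_goals (simp; try omega)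
  def maxRight : SGame → List SGame → ℝ
    | g, [] => rightScore g
    | g, h :: t => max (rightScore g) (maxRight h t)
  termination_by g l => 1 + sizeOf g + sizeOf l
  decreasing_by all_goals (simp; try omega)
  /-- Optimal final score when Right moves first. -/
  def rightScore : SGame → ℝ
    | mk _ [] s => s
    | mk _ (g :: R) _ => minLeft g R
  termination_by G => sizeOf G
  decreasing_by all_goals (simp; try omega)
  def minLeft : SGame → List SGame → ℝ
    | g, [] => leftScore g
    | g, h :: t => min (leftScore g) (minLeft h t)
  termination_by g l => 1 + sizeOf g + sizeOf l
  decreasing_by all_goals (simp; try omega)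
end

/-- Long-rule disjunctive sum. -/
def sum : SGame → SGame → SGame
  | mk L1 R1 s1, mk L2 R2 s2 =>
    mk ((L1.attach.map fun g => sum g.1 (mk L2 R2 s2)) ++
        (L2.attach.map fun h => sum (mk L1 R1 s1) h.1))
       ((R1.attach.map fun g => sum g.1 (mk L2 R2 s2)) ++
        (R2.attach.map fun h => sum (mk L1 R1 s1) h.1))
       (s1 + s2)
termination_by G H => sizeOf G + sizeOf H
decreasing_by
  all_goals simp
  · have := List.sizeOf_lt_of_mem g.2; omega
  · have := List.sizeOf_lt_of_mem h.2; omega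
  · have := List.sizeOf_lt_of_mem g.2; omega
  · have := List.sizeOf_lt_of_mem h.2; omega

end SGame

namespace SGame

/-- The game `{.|0|.}`. -/
def zero : SGame := mk [] [] 0

/-- Negation: `-G = {-G^R | -G^S | -G^L}`. -/
def neg : SGame → SGame
  | mk L R s =>
    mk (R.attach.map fun g => neg g.1) (L.attach.map fun g => neg g.1) (-s)
termination_by G => sizeOf G
decreasing_by
  all_goals (have := List.sizeOf_lt_of_mem g.2; simp; omega)

/-- Identity of game trees (options regarded as sets). -/
def Ident : SGame → SGame → Prop
  | mk L1 R1 s1, mk L2 R2 s2 =>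
    s1 = s2 ∧
    (∀ g ∈ L1.attach, ∃ h ∈ L2.attach, Ident g.1 h.1) ∧
    (∀ h ∈ L2.attach, ∃ g ∈ L1.attach, Ident g.1 h.1) ∧
    (∀ g ∈ R1.attach, ∃ h ∈ R2.attach, Ident g.1 h.1) ∧
    (∀ h ∈ R2.attach, ∃ g ∈ R1.attach, Ident g.1 h.1)
termination_by G H => sizeOf G + sizeOf H
decreasing_by
  all_goals
    (have := List.sizeOf_lt_of_mem g.2; have := List.sizeOf_lt_of_mem h.2
     simp; omega)

inductive Outcome : Type where
  | L | R | N | P | T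
deriving DecidableEq

/-- The outcome class of a game, determined by the signs of its final scores. -/
noncomputable def outcome (G : SGame) : Outcome :=
  if 0 < G.leftScore then
    (if 0 < G.rightScore then .L else if G.rightScore = 0 then .L else .N)
  else if G.leftScore = 0 then
    (if 0 < G.rightScore then .L else if G.rightScore = 0 then .T else .R)
  else
    (if 0 < G.rightScore then .P else .R)

/-- `G ≥ H`. -/
def Ge (G H : SGame) : Prop :=
  ∀ X : SGame,
    (0 ≤ (H.sum X).leftScore → 0 ≤ (G.sum X).leftScore) ∧
    (0 ≤ (H.sum X).rightScore → 0 ≤ (G.sum X).rightScore) ∧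
    (0 < (H.sum X).leftScore → 0 < (G.sum X).leftScore) ∧
    (0 < (H.sum X).rightScore → 0 < (G.sum X).rightScore)

/-- `G ≤ H`. -/
def Le (G H : SGame) : Prop :=
  ∀ X : SGame,
    ((H.sum X).leftScore ≤ 0 → (G.sum X).leftScore ≤ 0) ∧
    ((H.sum X).rightScore ≤ 0 → (G.sum X).rightScore ≤ 0) ∧
    ((H.sum X).leftScore < 0 → (G.sum X).leftScore < 0) ∧
    ((H.sum X).rightScore < 0 → (G.sum X).rightScore < 0)

/-- Game equality: same outcome in every disjunctive-sum context. -/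
def gameEq (G H : SGame) : Prop :=
  ∀ X : SGame, (G.sum X).outcome = (H.sum X).outcome

end SGame

namespace SGame

/-- Every score in the game tree of `G` satisfies `p`. -/
def AllScores (p : ℝ → Prop) : SGame → Prop
  | mk L R s =>
    p s ∧ (∀ g ∈ L.attach, AllScores p g.1) ∧ (∀ g ∈ R.attach, AllScores p g.1)
termination_by G => sizeOf G
decreasing_by all_goals (have := List.sizeOf_lt_of_mem g.2; simp; omega)

/-- `G ≡ H`: identical underlying game trees, with equal scores at all
termination vertices (vertices at which at least one player has no option,
i.e. where the play of some disjunctive sum can end). -/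
def Equiv : SGame → SGame → Prop
  | mk L1 R1 s1, mk L2 R2 s2 =>
    ((L1 = [] ∨ R1 = []) → s1 = s2) ∧
    (∀ g ∈ L1.attach, ∃ h ∈ L2.attach, Equiv g.1 h.1) ∧
    (∀ h ∈ L2.attach, ∃ g ∈ L1.attach, Equiv g.1 h.1) ∧
    (∀ g ∈ R1.attach, ∃ h ∈ R2.attach, Equiv g.1 h.1) ∧
    (∀ h ∈ R2.attach, ∃ g ∈ R1.attach, Equiv g.1 h.1)
termination_by G H => sizeOf G + sizeOf H
decreasing_by
  all_goals
    (have := List.sizeOf_lt_of_mem g.2; have := List.sizeOf_lt_of_mem h.2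
     simp; omega)

/-- `G` is in canonical form: hereditarily, no dominated and no reversible options. -/
def Canonical : SGame → Prop
  | mk L R s =>
    (∀ A ∈ L, ∀ B ∈ L, A ≠ B → ¬ Ge A B) ∧
    (∀ D ∈ R, ∀ E ∈ R, D ≠ E → ¬ Le D E) ∧
    (∀ A ∈ L, ∀ Ar ∈ A.rightOpts, ¬ Le Ar (mk L R s)) ∧
    (∀ D ∈ R, ∀ Dl ∈ D.leftOpts, ¬ Ge Dl (mk L R s)) ∧
    (∀ g ∈ L.attach, Canonical g.1) ∧ (∀ g ∈ R.attach, Canonical g.1)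
termination_by G => sizeOf G
decreasing_by all_goals (have := List.sizeOf_lt_of_mem g.2; simp; omega)

/-- One reduction step: removing a dominated option or bypassing a reversible
option, at the root or in some subposition. -/
inductive Step : SGame → SGame → Prop where
  | domL {L1 L2 : List SGame} {R : List SGame} {s : ℝ} {B : SGame} (A : SGame)
      (hA : A ∈ L1 ++ L2) (h : Ge A B) :
      Step (mk (L1 ++ B :: L2) R s) (mk (L1 ++ L2) R s)
  | domR {R1 R2 : List SGame} {L : List SGame} {s : ℝ} {E : SGame} (D : SGame)
      (hD : D ∈ R1 ++ R2) (h : Le D E) :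
      Step (mk L (R1 ++ E :: R2) s) (mk L (R1 ++ R2) s)
  | revL {L1 L2 : List SGame} {R : List SGame} {s : ℝ} {A Ar : SGame}
      (hAr : Ar ∈ A.rightOpts) (h : Le Ar (mk (L1 ++ A :: L2) R s)) :
      Step (mk (L1 ++ A :: L2) R s) (mk (L1 ++ Ar.leftOpts ++ L2) R s)
  | revR {R1 R2 : List SGame} {L : List SGame} {s : ℝ} {D Dl : SGame}
      (hDl : Dl ∈ D.leftOpts) (h : Ge Dl (mk L (R1 ++ D :: R2) s)) :
      Step (mk L (R1 ++ D :: R2) s) (mk L (R1 ++ Dl.rightOpts ++ R2) s)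
  | congL {g g' : SGame} {L1 L2 R : List SGame} {s : ℝ} (h : Step g g') :
      Step (mk (L1 ++ g :: L2) R s) (mk (L1 ++ g' :: L2) R s)
  | congR {g g' : SGame} {L R1 R2 : List SGame} {s : ℝ} (h : Step g g') :
      Step (mk L (R1 ++ g :: R2) s) (mk L (R1 ++ g' :: R2) s)

end SGame

/-! A game `G` with a Left option is separated from `0` by `X = {.|1|b}` with `b` very
negative: `X` lies in `𝓝`, whereas in `G +ℓ X` Right answers Left's first move, or opens, by
moving `X` to `{.|b|.}`, and adding `{.|b|.}` shifts both optimal scores by `b`; once `b` is below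
minus the Left scores of `G` and of its Left options, `G +ℓ X` lies in `𝓡`. Dually `{a|-1|.}`
separates a game with a Right option, and `X = 0` separates `{.|s|.}` with `s ≠ 0`. -/

namespace SGame

def num (b : ℝ) : SGame := mk [] [] b

lemma sum_mk (L₁ R₁ L₂ R₂ : List SGame) (s₁ s₂ : ℝ) :
    (mk L₁ R₁ s₁).sum (mk L₂ R₂ s₂) =
      mk (L₁.map (·.sum (mk L₂ R₂ s₂)) ++ L₂.map ((mk L₁ R₁ s₁).sum ·))
        (R₁.map (·.sum (mk L₂ R₂ s₂)) ++ R₂.map ((mk L₁ R₁ s₁).sum ·)) (s₁ + s₂) := by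
  rw [sum]
  simp only [List.map_attach_eq_pmap, List.pmap_eq_map]

lemma maxRight_lt_iff {g : SGame} {t : List SGame} {c : ℝ} :
    maxRight g t < c ↔ ∀ x ∈ g :: t, x.rightScore < c := by
  induction t generalizing g with
  | nil => simp [maxRight]
  | cons h t ih => simp [maxRight, ih]

lemma lt_minLeft_iff {g : SGame} {t : List SGame} {c : ℝ} :
    c < minLeft g t ↔ ∀ x ∈ g :: t, c < x.leftScore := by
  induction t generalizing g with
  | nil => simp [minLeft]
  | cons h t ih => simp [minLeft, ih]

@[simp] lemma leftOpts_mk (L R : List SGame) (s : ℝ) : (mk L R s).leftOpts = L := rfl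

@[simp] lemma rightOpts_mk (L R : List SGame) (s : ℝ) : (mk L R s).rightOpts = R := rfl

lemma leftOpts_sum (G H : SGame) :
    (G.sum H).leftOpts = G.leftOpts.map (·.sum H) ++ H.leftOpts.map (G.sum ·) := by
  cases G; cases H; rw [sum_mk]; rfl

lemma rightOpts_sum (G H : SGame) :
    (G.sum H).rightOpts = G.rightOpts.map (·.sum H) ++ H.rightOpts.map (G.sum ·) := by
  cases G; cases H; rw [sum_mk]; rfl

lemma leftScore_lt_iff {G : SGame} (h : G.leftOpts ≠ []) {c : ℝ} :
    G.leftScore < c ↔ ∀ x ∈ G.leftOpts, x.rightScore < c := by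
  obtain ⟨_ | ⟨g, L⟩, R, s⟩ := G
  · exact absurd rfl h
  · rw [leftScore]; exact maxRight_lt_iff

lemma lt_rightScore_iff {G : SGame} (h : G.rightOpts ≠ []) {c : ℝ} :
    c < G.rightScore ↔ ∀ x ∈ G.rightOpts, c < x.leftScore := by
  obtain ⟨L, _ | ⟨g, R⟩, s⟩ := G
  · exact absurd rfl h
  · rw [rightScore]; exact lt_minLeft_iff

lemma rightScore_le_leftScore_of_mem_leftOpts {G x : SGame} (hx : x ∈ G.leftOpts) :
    x.rightScore ≤ G.leftScore :=
  not_lt.1 fun h => (lt_irrefl _) ((leftScore_lt_iff (List.ne_nil_of_mem hx)).1 h x hx)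

lemma rightScore_le_leftScore_of_mem_rightOpts {G x : SGame} (hx : x ∈ G.rightOpts) :
    G.rightScore ≤ x.leftScore :=
  not_lt.1 fun h => (lt_irrefl _) ((lt_rightScore_iff (List.ne_nil_of_mem hx)).1 h x hx)

lemma maxRight_map {f : SGame → SGame} {b : ℝ} {g : SGame} {t : List SGame}
    (h : ∀ x ∈ g :: t, (f x).rightScore = x.rightScore + b) :
    maxRight (f g) (t.map f) = maxRight g t + b := by
  induction t generalizing g with
  | nil => rw [List.map_nil, maxRight, maxRight]; exact h g (by simp)
  | cons c t ih =>
    rw [List.map_cons, maxRight, maxRight, h g (by simp),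
      ih fun x hx => h x (List.mem_cons_of_mem _ hx), max_add_add_right]

lemma minLeft_map {f : SGame → SGame} {b : ℝ} {g : SGame} {t : List SGame}
    (h : ∀ x ∈ g :: t, (f x).leftScore = x.leftScore + b) :
    minLeft (f g) (t.map f) = minLeft g t + b := by
  induction t generalizing g with
  | nil => rw [List.map_nil, minLeft, minLeft]; exact h g (by simp)
  | cons c t ih =>
    rw [List.map_cons, minLeft, minLeft, h g (by simp),
      ih fun x hx => h x (List.mem_cons_of_mem _ hx), min_add_add_right]

lemma sum_num (L R : List SGame) (s b : ℝ) :
    (mk L R s).sum (num b) = mk (L.map (·.sum (num b))) (R.map (·.sum (num b))) (s + b) := by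
  simp [num, sum_mk]

theorem scores_sum_num : ∀ (G : SGame) (b : ℝ),
    (G.sum (num b)).leftScore = G.leftScore + b ∧
      (G.sum (num b)).rightScore = G.rightScore + b
  | mk L R s, b => by
    have ih : ∀ x ∈ L ++ R, (x.sum (num b)).leftScore = x.leftScore + b ∧
        (x.sum (num b)).rightScore = x.rightScore + b := fun x hx => scores_sum_num x b
    rw [sum_num]
    constructor
    · cases L with
      | nil => rw [List.map_nil, leftScore, leftScore]
      | cons g L =>
        rw [List.map_cons, leftScore, leftScore]
        exact maxRight_map fun x hx => (ih x (List.mem_append_left _ hx)).2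
    · cases R with
      | nil => rw [List.map_nil, rightScore, rightScore]
      | cons g R =>
        rw [List.map_cons, rightScore, rightScore]
        exact minLeft_map fun x hx => (ih x (List.mem_append_right _ hx)).1
termination_by G => sizeOf G
decreasing_by
  rcases List.mem_append.1 hx with hx | hx <;> (have := List.sizeOf_lt_of_mem hx; simp; omega)

lemma outcome_eq_R {G : SGame} (hl : G.leftScore < 0) (hr : G.rightScore < 0) :
    G.outcome = .R := by
  simp [outcome, hl.not_gt, hl.ne, hr.not_gt]

lemma outcome_eq_L {G : SGame} (hl : 0 < G.leftScore) (hr : 0 < G.rightScore) :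
    G.outcome = .L := by
  simp [outcome, hl, hr]

lemma outcome_eq_N {G : SGame} (hl : 0 < G.leftScore) (hr : G.rightScore < 0) :
    G.outcome = .N := by
  simp [outcome, hl, hr.not_gt, hr.ne]

lemma outcome_num_eq_T_iff {s : ℝ} : (num s).outcome = .T ↔ s = 0 := by
  have hl : (num s).leftScore = s := by rw [num, leftScore]
  have hr : (num s).rightScore = s := by rw [num, rightScore]
  rcases lt_trichotomy s 0 with hs | rfl | hs
  · simp [outcome, hl, hr, hs.not_gt, hs.ne]
  · simp [outcome, hl, hr]
  · simp [outcome, hl, hr, hs, hs.ne']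

lemma exists_neg_forall_add_neg {α : Type*} (f : α → ℝ) (l : List α) :
    ∃ b < 0, ∀ x ∈ l, f x + b < 0 := by
  obtain ⟨M, hM⟩ := (l.finite_toSet.image f).bddAbove
  refine ⟨-|M| - 1, by linarith [abs_nonneg M], fun x hx => ?_⟩
  linarith [hM (Set.mem_image_of_mem f hx), le_abs_self M]

lemma rightScore_sum_le_leftScore_add (G : SGame) (a b : ℝ) :
    (G.sum (mk [] [num b] a)).rightScore ≤ G.leftScore + b := by
  have hmem : G.sum (num b) ∈ (G.sum (mk [] [num b] a)).rightOpts := by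
    simp [rightOpts_sum]
  rw [← (scores_sum_num G b).1]
  exact rightScore_le_leftScore_of_mem_rightOpts hmem

lemma rightScore_add_le_leftScore_sum (G : SGame) (a b : ℝ) :
    G.rightScore + a ≤ (G.sum (mk [num a] [] b)).leftScore := by
  have hmem : G.sum (num a) ∈ (G.sum (mk [num a] [] b)).leftOpts := by
    simp [leftOpts_sum]
  rw [← (scores_sum_num G a).2]
  exact rightScore_le_leftScore_of_mem_leftOpts hmem

theorem exists_outcome_sum_ne_of_leftOpts_ne_nil {G : SGame} (hG : G.leftOpts ≠ []) :
    ∃ X, (G.sum X).outcome ≠ X.outcome := by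
  obtain ⟨b, hb, hbG⟩ := exists_neg_forall_add_neg leftScore (G :: G.leftOpts)
  set X := mk [] [num b] 1
  have hopts : (G.sum X).leftOpts = G.leftOpts.map (·.sum X) := by
    simp [leftOpts_sum, X]
  have hl : (G.sum X).leftScore < 0 := by
    rw [leftScore_lt_iff (by simpa [hopts] using hG), hopts, List.forall_mem_map]
    exact fun y hy =>
      (rightScore_sum_le_leftScore_add y 1 b).trans_lt (hbG y (List.mem_cons_of_mem _ hy))
  have hr : (G.sum X).rightScore < 0 :=
    (rightScore_sum_le_leftScore_add G 1 b).trans_lt (hbG G List.mem_cons_self)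
  have hXl : X.leftScore = 1 := by rw [leftScore]
  have hXr : X.rightScore = b := by rw [rightScore, minLeft, num, leftScore]
  refine ⟨X, ?_⟩
  rw [outcome_eq_R hl hr, outcome_eq_N (hXl ▸ one_pos) (hXr ▸ hb)]
  decide

theorem exists_outcome_sum_ne_of_rightOpts_ne_nil {G : SGame} (hG : G.rightOpts ≠ []) :
    ∃ X, (G.sum X).outcome ≠ X.outcome := by
  obtain ⟨b, hb, hbG⟩ := exists_neg_forall_add_neg (-rightScore ·) (G :: G.rightOpts)
  set X := mk [num (-b)] [] (-1)
  have hopts : (G.sum X).rightOpts = G.rightOpts.map (·.sum X) := by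
    simp [rightOpts_sum, X]
  have hl : 0 < (G.sum X).leftScore :=
    (show 0 < G.rightScore + -b by linarith [hbG G List.mem_cons_self]).trans_le
      (rightScore_add_le_leftScore_sum G (-b) (-1))
  have hr : 0 < (G.sum X).rightScore := by
    rw [lt_rightScore_iff (by simpa [hopts] using hG), hopts, List.forall_mem_map]
    exact fun y hy =>
      (show 0 < y.rightScore + -b by linarith [hbG y (List.mem_cons_of_mem _ hy)]).trans_le
        (rightScore_add_le_leftScore_sum y (-b) (-1))
  have hXl : X.leftScore = -b := by rw [leftScore, maxRight, num, rightScore]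
  have hXr : X.rightScore = -1 := by rw [rightScore]
  refine ⟨X, ?_⟩
  rw [outcome_eq_L hl hr, outcome_eq_N (by linarith) (by linarith)]
  decide

theorem outcome_num_sum_zero_ne {s : ℝ} (hs : s ≠ 0) :
    ((num s).sum zero).outcome ≠ zero.outcome := by
  have hsum : (num s).sum zero = num s := by simp [num, zero, sum_mk]
  rw [hsum, show zero = num 0 from rfl, outcome_num_eq_T_iff.2 rfl]
  exact mt outcome_num_eq_T_iff.1 hs

end SGame

/-- If `G` is not identical (as a game tree) to `0 = {.|0|.}`, then `G ≠ 0`: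
some game `X` gives `G +ℓ X` and `X` different outcomes. -/
theorem ne_zero_of_not_ident_zero (G : SGame) (h : ¬ SGame.Ident G SGame.zero) :
    ∃ X : SGame, (G.sum X).outcome ≠ X.outcome := by
  by_cases hL : G.leftOpts = []
  · by_cases hR : G.rightOpts = []
    · obtain ⟨L, R, s⟩ := G
      obtain rfl : L = [] := hL
      obtain rfl : R = [] := hR
      have hs : s ≠ 0 := by
        rintro rfl
        exact h (by simp [SGame.Ident, SGame.zero])
      exact ⟨SGame.zero, SGame.outcome_num_sum_zero_ne hs⟩
    · exact SGame.exists_outcome_sum_ne_of_rightOpts_ne_nil hR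
  · exact SGame.exists_outcome_sum_ne_of_leftOpts_ne_nil hL
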